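/- Symmetrically, the set P'_B = { v ∈ V : pw(v) ≥ w_B } containing v_B is connected, where pw(v) = d_G(v_A,v) − d_G(v_B,v): every vertex on any shortest path from v_B to some v ∈ P'_B has partition weight at least pw(v). -/

import Mathlib

/-!
Split a shortest walk `p` from `v_B` to `v` at a vertex `u`. The head has weight at least
`d(v_B,u)`, so the tail has weight at most `d(v_B,v) - d(v_B,u)`, and the triangle inequality
`d(v_A,v) ≤ d(v_A,u) + weight(tail)` gives `pw u ≥ pw v`. Hence a shortest walk from `v_B` to a
vertex of `P'_B` stays inside `P'_B`, which makes `P'_B` connected.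
-/

def walkWeight {V : Type*} {G : SimpleGraph V} (wt : V → V → ℝ) {u v : V}
    (p : G.Walk u v) : ℝ :=
  (p.darts.map (fun d => wt d.toProd.1 d.toProd.2)).sum

namespace SimpleGraph

variable {V : Type*} {G : SimpleGraph V}

theorem induce_connected_of_forall_walk_support_subset {s : Set V} {b : V} (hb : b ∈ s)
    (h : ∀ v ∈ s, ∃ p : G.Walk b v, {w | w ∈ p.support} ⊆ s) : (G.induce s).Connected :=
  G.induce_connected_of_patches b hb fun hv =>
    let ⟨p, hp⟩ := h _ hv
    ⟨_, hp, p.start_mem_support, p.end_mem_support, p.connected_induce_support.preconnected _ _⟩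

end SimpleGraph

section WalkWeight

variable {V : Type*} {G : SimpleGraph V} (wt : V → V → ℝ)

theorem walkWeight_append {u v w : V} (p : G.Walk u v) (q : G.Walk v w) :
    walkWeight wt (p.append q) = walkWeight wt p + walkWeight wt q := by
  simp [walkWeight, SimpleGraph.Walk.darts_append]

theorem walkWeight_takeUntil_add_dropUntil [DecidableEq V] {u v w : V} (p : G.Walk u v)
    (hw : w ∈ p.support) :
    walkWeight wt (p.takeUntil w hw) + walkWeight wt (p.dropUntil w hw) = walkWeight wt p := by
  rw [← walkWeight_append, p.take_spec hw]

variable {wt} {d : V → V → ℝ}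
  (hd : ∀ x y : V, IsLeast {r : ℝ | ∃ p : G.Walk x y, walkWeight wt p = r} (d x y))
include hd

theorem dist_le_walkWeight {x y : V} (p : G.Walk x y) : d x y ≤ walkWeight wt p :=
  (hd x y).2 ⟨p, rfl⟩

theorem dist_le_dist_add_walkWeight (a : V) {u v : V} (q : G.Walk u v) :
    d a v ≤ d a u + walkWeight wt q := by
  obtain ⟨p, hp⟩ := (hd a u).1
  rw [← hp, ← walkWeight_append]
  exact dist_le_walkWeight hd _

theorem dist_sub_dist_le_of_mem_support_of_shortest (a : V) {b v u : V} {p : G.Walk b v}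
    (hp : walkWeight wt p = d b v) (hu : u ∈ p.support) :
    d a v - d b v ≤ d a u - d b u := by
  classical
  have hsplit := walkWeight_takeUntil_add_dropUntil wt p hu
  have hbu := dist_le_walkWeight hd (p.takeUntil u hu)
  have hav := dist_le_dist_add_walkWeight hd a (p.dropUntil u hu)
  linarith

end WalkWeight

theorem upper_partition_connected_general {V : Type*} (G : SimpleGraph V)
    (wt : V → V → ℝ)
    (d : V → V → ℝ)
    (hd : ∀ x y : V, IsLeast {r : ℝ | ∃ p : G.Walk x y, walkWeight wt p = r} (d x y))
    (vA vB : V) (wB : ℝ)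
    (hvB : wB ≤ d vA vB - d vB vB) :
    (∀ v : V, wB ≤ d vA v - d vB v →
      ∀ p : G.Walk vB v, walkWeight wt p = d vB v →
        ∀ u ∈ p.support, d vA v - d vB v ≤ d vA u - d vB u ∧ wB ≤ d vA u - d vB u) ∧
    (G.induce {v : V | wB ≤ d vA v - d vB v}).Connected := by
  have hmono : ∀ v (p : G.Walk vB v), walkWeight wt p = d vB v →
      ∀ u ∈ p.support, d vA v - d vB v ≤ d vA u - d vB u :=
    fun _ _ hp _ hu => dist_sub_dist_le_of_mem_support_of_shortest hd vA hp hu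
  refine ⟨fun v hv p hp u hu => ⟨hmono v p hp u hu, hv.trans (hmono v p hp u hu)⟩, ?_⟩
  refine SimpleGraph.induce_connected_of_forall_walk_support_subset hvB fun v hv => ?_
  obtain ⟨p, hp⟩ := (hd vB v).1
  exact ⟨p, fun u hu => hv.trans (hmono v p hp u hu)⟩

/-- Symmetrically, with partition weight `pw v = d(v_A,v) − d(v_B,v)`, the superlevel set
`P'_B = {v | pw v ≥ w_B}` containing `v_B` is connected: every vertex `u` on any shortest
path from `v_B` to a vertex `v ∈ P'_B` satisfies `pw u ≥ pw v ≥ w_B`, and the induced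
subgraph on `P'_B` is connected. -/
theorem upper_partition_connected {V : Type*} [Fintype V] (G : SimpleGraph V)
    (wt : V → V → ℝ)
    (hwpos : ∀ u v, G.Adj u v → 0 < wt u v)
    (hwsymm : ∀ u v, wt u v = wt v u)
    (d : V → V → ℝ)
    (hd : ∀ x y : V, IsLeast {r : ℝ | ∃ p : G.Walk x y, walkWeight wt p = r} (d x y))
    (vA vB : V) (wB : ℝ)
    (hvB : wB ≤ d vA vB - d vB vB) :
    (∀ v : V, wB ≤ d vA v - d vB v →
      ∀ p : G.Walk vB v, walkWeight wt p = d vB v →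
        ∀ u ∈ p.support, d vA v - d vB v ≤ d vA u - d vB u ∧ wB ≤ d vA u - d vB u) ∧
    (G.induce {v : V | wB ≤ d vA v - d vB v}).Connected :=
  upper_partition_connected_general G wt d hd vA vB wB hvB
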